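/- Let N ≥ 1 and m ≥ 1, let M₀, M₁, …, M_m be N×N complex Hermitian matrices, and let v ∈ ℂ^N be nonzero. Suppose there exists μ ∈ ℝ^m such that H := M₀ + Σ_{j=1}^m μ_j M_j is positive semidefinite, H v = 0, and ker(x ↦ H x) = span{v}, and suppose v* M_{j₀} v ≠ 0 for some index j₀. Let N₁, …, N_p be arbitrary additional N×N complex Hermitian matrices. Then for every positive semidefinite Hermitian matrix X satisfying both Tr(M_j X) = v* M_j v for all j = 1,…,m and Tr(N_k X) = v* N_k v for all k = 1,…,p, one has Tr(M₀ X) ≥ Tr(M₀ v v*), with equality only if X = v v*. That is, adding arbitrary extra measurement constraints satisfied by v preserves the exact recovery of v v* as the unique optimal solution. -/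

import Mathlib

/-!
Weak duality with the certificate `H = M₀ + ∑ μⱼ Mⱼ`: the constraints fix `Tr(Mⱼ X)` and
`H v = 0`, so `Tr(M₀ X) - Tr(M₀ vv*) = Tr(H X)`, which is `≥ 0` as the trace of a product of two
positive semidefinite matrices. If it vanishes then `H X = 0`, so every column of `X` lies in
`ker H = span v`; Hermitian symmetry then forces `X = t • vv*`, and the constraint `j₀` gives `t = 1`.
-/

open Matrix ComplexOrder

namespace Matrix

variable {n ι 𝕜 : Type*} [RCLike 𝕜]

theorem IsHermitian.exists_eq_smul_star_of_vecMulVec {v c : n → 𝕜} (hv : v ≠ 0)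
    (h : (vecMulVec v c).IsHermitian) : ∃ t : 𝕜, c = t • star v := by
  obtain ⟨i, hi⟩ : ∃ i, v i ≠ 0 := Function.ne_iff.mp hv
  refine ⟨star (c i) / v i, funext fun j => ?_⟩
  have hij := congrFun (congrFun h i) j
  simp only [conjTranspose_vecMulVec, vecMulVec_apply, Pi.star_apply] at hij
  simp only [Pi.smul_apply, Pi.star_apply, smul_eq_mul]
  rw [div_mul_eq_mul_div, eq_div_iff hi]
  linear_combination -hij

variable [Fintype n]

open scoped MatrixOrder Matrix.Norms.L2Operator in
theorem PosSemidef.exists_eq_conjTranspose_mul_self {A : Matrix n n 𝕜} (hA : A.PosSemidef) :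
    ∃ B : Matrix n n 𝕜, A = Bᴴ * B := by
  classical
  obtain ⟨B, rfl⟩ := CStarAlgebra.nonneg_iff_eq_star_mul_self.mp hA.nonneg
  exact ⟨B, rfl⟩

theorem trace_conjTranspose_mul_self_mul_conjTranspose_mul_self (P Q : Matrix n n 𝕜) :
    (Pᴴ * P * (Qᴴ * Q)).trace = (P * Qᴴ * (P * Qᴴ)ᴴ).trace := by
  rw [Matrix.mul_assoc, trace_mul_comm, conjTranspose_mul, conjTranspose_conjTranspose]
  simp only [Matrix.mul_assoc]

theorem PosSemidef.trace_mul_nonneg {A B : Matrix n n 𝕜} (hA : A.PosSemidef) (hB : B.PosSemidef) :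
    0 ≤ (A * B).trace := by
  obtain ⟨P, rfl⟩ := hA.exists_eq_conjTranspose_mul_self
  obtain ⟨Q, rfl⟩ := hB.exists_eq_conjTranspose_mul_self
  rw [trace_conjTranspose_mul_self_mul_conjTranspose_mul_self]
  exact (posSemidef_self_mul_conjTranspose _).trace_nonneg

theorem PosSemidef.trace_mul_eq_zero_iff {A B : Matrix n n 𝕜} (hA : A.PosSemidef)
    (hB : B.PosSemidef) : (A * B).trace = 0 ↔ A * B = 0 := by
  refine ⟨fun h => ?_, fun h => by rw [h, trace_zero]⟩
  obtain ⟨P, rfl⟩ := hA.exists_eq_conjTranspose_mul_self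
  obtain ⟨Q, rfl⟩ := hB.exists_eq_conjTranspose_mul_self
  rw [trace_conjTranspose_mul_self_mul_conjTranspose_mul_self,
    trace_mul_conjTranspose_self_eq_zero_iff] at h
  calc Pᴴ * P * (Qᴴ * Q) = Pᴴ * (P * Qᴴ) * Q := by simp only [Matrix.mul_assoc]
    _ = 0 := by rw [h, Matrix.mul_zero, Matrix.zero_mul]

theorem trace_mul_vecMulVec_star (A : Matrix n n 𝕜) (v : n → 𝕜) :
    (A * vecMulVec v (star v)).trace = star v ⬝ᵥ (A *ᵥ v) := by
  rw [mul_vecMulVec, trace_vecMulVec, dotProduct_comm]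

theorem trace_add_sum_smul_mul_sub [Fintype ι] (M₀ : Matrix n n 𝕜) (M : ι → Matrix n n 𝕜)
    (μ : ι → 𝕜) {X Y : Matrix n n 𝕜} (h : ∀ j, (M j * X).trace = (M j * Y).trace) :
    ((M₀ + ∑ j, μ j • M j) * X).trace - ((M₀ + ∑ j, μ j • M j) * Y).trace
      = (M₀ * X).trace - (M₀ * Y).trace := by
  simp only [add_mul, Finset.sum_mul, smul_mul_assoc, trace_add, trace_sum, trace_smul, h]
  abel

theorem exists_eq_vecMulVec_of_mul_eq_zero {H X : Matrix n n 𝕜} {v : n → 𝕜}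
    (hker : ∀ x, H *ᵥ x = 0 → ∃ c : 𝕜, x = c • v) (hHX : H * X = 0) :
    ∃ c : n → 𝕜, X = vecMulVec v c := by
  have hcol : ∀ j, H *ᵥ (fun i => X i j) = 0 := fun j => by
    ext i
    simpa [mul_apply, mulVec, dotProduct] using congrFun (congrFun hHX i) j
  choose c hc using fun j => hker _ (hcol j)
  exact ⟨c, by ext i j; simpa [vecMulVec_apply, mul_comm] using congrFun (hc j) i⟩

end Matrix

theorem stmt_2_general (N m p : ℕ)
    (M₀ : Matrix (Fin N) (Fin N) ℂ) (M : Fin m → Matrix (Fin N) (Fin N) ℂ)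
    (v : Fin N → ℂ) (hv : v ≠ 0)
    (μ : Fin m → ℝ)
    (hPSD : (M₀ + ∑ j, (μ j : ℂ) • M j).PosSemidef)
    (hHv : (M₀ + ∑ j, (μ j : ℂ) • M j) *ᵥ v = 0)
    (hker : ∀ x : Fin N → ℂ,
      (M₀ + ∑ j, (μ j : ℂ) • M j) *ᵥ x = 0 ↔ ∃ c : ℂ, x = c • v)
    (j₀ : Fin m) (hj₀ : star v ⬝ᵥ (M j₀ *ᵥ v) ≠ 0)
    (Nmat : Fin p → Matrix (Fin N) (Fin N) ℂ) :
    ∀ X : Matrix (Fin N) (Fin N) ℂ, X.PosSemidef →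
      (∀ j, (M j * X).trace = star v ⬝ᵥ (M j *ᵥ v)) →
      (∀ k, (Nmat k * X).trace = star v ⬝ᵥ (Nmat k *ᵥ v)) →
      ((M₀ * vecMulVec v (star v)).trace.re ≤ (M₀ * X).trace.re ∧
        ((M₀ * X).trace = (M₀ * vecMulVec v (star v)).trace →
          X = vecMulVec v (star v))) := by
  intro X hX hMX _
  set H := M₀ + ∑ j, (μ j : ℂ) • M j
  have hgap : (M₀ * X).trace - (M₀ * vecMulVec v (star v)).trace = (H * X).trace := by
    rw [← trace_add_sum_smul_mul_sub M₀ M _ fun j => by rw [hMX, trace_mul_vecMulVec_star],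
      trace_mul_vecMulVec_star, hHv, dotProduct_zero, sub_zero]
  refine ⟨?_, fun heq => ?_⟩
  · have hre := (Complex.nonneg_iff.mp (hPSD.trace_mul_nonneg hX)).1
    rw [← hgap, Complex.sub_re, sub_nonneg] at hre
    exact hre
  · have hHX : H * X = 0 := (hPSD.trace_mul_eq_zero_iff hX).1 (by rw [← hgap, heq, sub_self])
    obtain ⟨c, rfl⟩ := exists_eq_vecMulVec_of_mul_eq_zero (fun x => (hker x).1) hHX
    obtain ⟨t, rfl⟩ := hX.1.exists_eq_smul_star_of_vecMulVec hv
    have ht : t * star v ⬝ᵥ (M j₀ *ᵥ v) = star v ⬝ᵥ (M j₀ *ᵥ v) := by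
      simpa only [vecMulVec_smul, Matrix.mul_smul, trace_smul, trace_mul_vecMulVec_star,
        smul_eq_mul] using hMX j₀
    rw [(mul_eq_right₀ hj₀).1 ht, one_smul]

theorem stmt_2 (N m p : ℕ) (hN : 1 ≤ N) (hm : 1 ≤ m)
    (M₀ : Matrix (Fin N) (Fin N) ℂ) (M : Fin m → Matrix (Fin N) (Fin N) ℂ)
    (hM₀ : M₀.IsHermitian) (hM : ∀ j, (M j).IsHermitian)
    (v : Fin N → ℂ) (hv : v ≠ 0)
    (μ : Fin m → ℝ)
    (hPSD : (M₀ + ∑ j, (μ j : ℂ) • M j).PosSemidef)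
    (hHv : (M₀ + ∑ j, (μ j : ℂ) • M j) *ᵥ v = 0)
    (hker : ∀ x : Fin N → ℂ,
      (M₀ + ∑ j, (μ j : ℂ) • M j) *ᵥ x = 0 ↔ ∃ c : ℂ, x = c • v)
    (j₀ : Fin m) (hj₀ : star v ⬝ᵥ (M j₀ *ᵥ v) ≠ 0)
    (Nmat : Fin p → Matrix (Fin N) (Fin N) ℂ)
    (hNmat : ∀ k, (Nmat k).IsHermitian) :
    ∀ X : Matrix (Fin N) (Fin N) ℂ, X.PosSemidef →
      (∀ j, (M j * X).trace = star v ⬝ᵥ (M j *ᵥ v)) →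
      (∀ k, (Nmat k * X).trace = star v ⬝ᵥ (Nmat k *ᵥ v)) →
      ((M₀ * vecMulVec v (star v)).trace.re ≤ (M₀ * X).trace.re ∧
        ((M₀ * X).trace = (M₀ * vecMulVec v (star v)).trace →
          X = vecMulVec v (star v))) :=
  stmt_2_general N m p M₀ M v hv μ hPSD hHv hker j₀ hj₀ Nmat
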